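/- Let κ ∈ (−1/2, 0) and let T be the integral operator on (0,π) (with Lebesgue measure) with kernel K(θ,φ) = (θφ)^κ · ((π−θ)(π−φ))^κ. If 1/p < 1+κ and 1/q > −κ for 1 ≤ p, q ≤ ∞, then T is bounded from L^p(0,π) to L^q(0,π). Moreover, for f = χ_{(0,1)} one has Tf(θ) ≳ θ^κ for θ ∈ (0,1), and hence T is not bounded from L^p(0,π) into L^{−1/κ}(0,π) for any p with 1/p < 1+κ. -/

import Mathlib

open Real MeasureTheory Set
open scoped ENNReal

/-!
The kernel factors as `K(θ, φ) = w(θ) w(φ)` with `w = jacobiWeight κ`, so `T` is the rank-one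
operator `f ↦ (∫ w f) • w`. By Hölder, `‖Tf‖_q ≤ ‖w‖_{p'} ‖w‖_q ‖f‖_p`, and `w ∈ L^r` as soon as
`κ r > -1`, i.e. `1/r > -κ`; for the conjugate exponent `p'` this is the condition `1/p < 1 + κ`.
For `f = χ_{(0,1)}` one gets `Tf = (∫₀¹ w) w ≥ c θ^κ` on `(0, 1)`, and `(θ^κ)^(-1/κ) = θ⁻¹` is not
integrable at `0`, so `Tf ∉ L^{-1/κ}` although `f` lies in every `L^p`.
-/

noncomputable section

def jacobiWeight (κ x : ℝ) : ℝ := x ^ κ * (π - x) ^ κ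

def kernelOp (κ : ℝ) (f : ℝ → ℝ) (θ : ℝ) : ℝ :=
  ∫ φ in Ioo (0 : ℝ) π, ((θ * φ) ^ κ * ((π - θ) * (π - φ)) ^ κ) * f φ

end

lemma measurable_jacobiWeight (κ : ℝ) : Measurable (jacobiWeight κ) := by
  unfold jacobiWeight; fun_prop

lemma integrableOn_jacobiWeight {t : ℝ} (ht : -1 < t) :
    IntegrableOn (jacobiWeight t) (Ioo 0 π) := by
  have hπ := pi_pos
  have hleft : IntegrableOn (jacobiWeight t) (Icc 0 (π / 2)) := by
    have hpow : IntegrableOn (fun x : ℝ => x ^ t) (Icc 0 (π / 2)) := by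
      rw [integrableOn_Icc_iff_integrableOn_Ioc,
        ← intervalIntegrable_iff_integrableOn_Ioc_of_le (by positivity)]
      exact intervalIntegral.intervalIntegrable_rpow' ht
    refine hpow.mul_continuousOn (fun x hx => ?_) isCompact_Icc
    exact ((continuousAt_const.sub continuousAt_id).rpow_const
      (Or.inl (by linarith [hx.2] : 0 < π - x).ne')).continuousWithinAt
  have hright : IntegrableOn (jacobiWeight t) (Icc (π / 2) π) := by
    have hpow : IntegrableOn (fun x : ℝ => (π - x) ^ t) (Icc (π / 2) π) := by
      have hrefl :=
        (intervalIntegral.intervalIntegrable_rpow' ht (a := π / 2) (b := 0)).comp_sub_left π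
      rw [sub_zero, sub_half] at hrefl
      rw [integrableOn_Icc_iff_integrableOn_Ioc,
        ← intervalIntegrable_iff_integrableOn_Ioc_of_le (by linarith)]
      exact hrefl
    refine hpow.continuousOn_mul (fun x hx => ?_) isCompact_Icc
    exact (continuousAt_id.rpow_const (Or.inl (by linarith [hx.1] : 0 < x).ne')).continuousWithinAt
  refine (hleft.union hright).mono_set fun x hx => ?_
  rcases le_total x (π / 2) with h | h
  exacts [Or.inl ⟨hx.1.le, h⟩, Or.inr ⟨h, hx.2.le⟩]

lemma memLp_jacobiWeight {κ : ℝ} {r : ℝ≥0∞} (hr₀ : r ≠ 0) (hr : r ≠ ∞)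
    (hκr : -1 < κ * r.toReal) : MemLp (jacobiWeight κ) r (volume.restrict (Ioo 0 π)) := by
  refine (memLp_norm_rpow_iff (measurable_jacobiWeight κ).aestronglyMeasurable hr₀ hr).1 ?_
  rw [ENNReal.div_self hr₀ hr, memLp_one_iff_integrable]
  refine (integrableOn_jacobiWeight hκr).congr_fun (fun x hx => ?_) measurableSet_Ioo
  have hx₀ : 0 ≤ x := hx.1.le
  have hx₁ : 0 ≤ π - x := by linarith [hx.2]
  rw [jacobiWeight, jacobiWeight, norm_of_nonneg (by positivity), mul_rpow (by positivity)
    (by positivity), ← rpow_mul hx₀, ← rpow_mul hx₁]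

lemma memLp_jacobiWeight_of_neg_lt_inv {κ : ℝ} {r : ℝ≥0∞} (hκ : κ ≤ 0)
    (hr : -κ < r⁻¹.toReal) : MemLp (jacobiWeight κ) r (volume.restrict (Ioo 0 π)) := by
  have hinv : 0 < r⁻¹.toReal := by linarith
  rw [ENNReal.toReal_pos_iff, ENNReal.inv_pos, ENNReal.inv_lt_top] at hinv
  have hr₀ : 0 < r.toReal := ENNReal.toReal_pos hinv.2.ne' hinv.1
  refine memLp_jacobiWeight hinv.2.ne' hinv.1 ?_
  rw [ENNReal.toReal_inv] at hr
  have hmul := mul_lt_mul_of_pos_right hr hr₀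
  rw [inv_mul_cancel₀ hr₀.ne'] at hmul
  linarith

lemma kernel_eq_jacobiWeight_mul {κ θ φ : ℝ} (hθ : θ ∈ Icc 0 π) (hφ : φ ∈ Icc 0 π) :
    (θ * φ) ^ κ * ((π - θ) * (π - φ)) ^ κ = jacobiWeight κ θ * jacobiWeight κ φ := by
  rw [mul_rpow hθ.1 hφ.1, mul_rpow (by linarith [hθ.2]) (by linarith [hφ.2]), jacobiWeight,
    jacobiWeight]
  ring

lemma kernelOp_eq {κ θ : ℝ} (hθ : θ ∈ Icc 0 π) (f : ℝ → ℝ) :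
    kernelOp κ f θ = (∫ φ in Ioo 0 π, jacobiWeight κ φ * f φ) * jacobiWeight κ θ := by
  rw [kernelOp, ← integral_mul_const]
  refine setIntegral_congr_fun measurableSet_Ioo fun φ hφ => ?_
  rw [kernel_eq_jacobiWeight_mul hθ (Ioo_subset_Icc_self hφ)]
  ring

lemma eLpNorm_integral_mul_smul_le {α : Type*} [MeasurableSpace α] {μ : Measure α}
    {p p' : ℝ≥0∞} [p'.HolderConjugate p] {u f : α → ℝ} (hu : AEStronglyMeasurable u μ)
    (hf : AEStronglyMeasurable f μ) (v : α → ℝ) (q : ℝ≥0∞) :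
    eLpNorm ((∫ y, u y * f y ∂μ) • v) q μ ≤ eLpNorm u p' μ * eLpNorm f p μ * eLpNorm v q μ := by
  rw [eLpNorm_const_smul]
  gcongr
  calc ‖∫ y, u y * f y ∂μ‖ₑ ≤ eLpNorm (u • f) 1 μ := by
        rw [eLpNorm_one_eq_lintegral_enorm]; exact enorm_integral_le_lintegral_enorm _
    _ ≤ eLpNorm u p' μ * eLpNorm f p μ := eLpNorm_smul_le_mul_eLpNorm hf hu

theorem exists_eLpNorm_kernelOp_le {κ : ℝ} (hκ : κ ≤ 0) {p q : ℝ≥0∞} (hp : 1 ≤ p)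
    (hpκ : p⁻¹.toReal < 1 + κ) (hqκ : -κ < q⁻¹.toReal) :
    ∃ C : ℝ, 0 < C ∧ ∀ f : ℝ → ℝ, AEStronglyMeasurable f (volume.restrict (Ioo 0 π)) →
      eLpNorm (kernelOp κ f) q (volume.restrict (Ioo 0 π)) ≤
        ENNReal.ofReal C * eLpNorm f p (volume.restrict (Ioo 0 π)) := by
  set μ := volume.restrict (Ioo (0 : ℝ) π)
  set p' : ℝ≥0∞ := (1 - p⁻¹)⁻¹
  have hp'inv : p'⁻¹ = 1 - p⁻¹ := inv_inv _
  have hpinv : p⁻¹ ≤ 1 := ENNReal.inv_le_one.2 hp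
  have : p'.HolderConjugate p := ENNReal.holderConjugate_iff.2 (by
    rw [hp'inv, tsub_add_cancel_of_le hpinv])
  have hp'κ : -κ < p'⁻¹.toReal := by
    rw [hp'inv, ENNReal.toReal_sub_of_le hpinv ENNReal.one_ne_top, ENNReal.toReal_one]
    linarith
  have hp'mem := memLp_jacobiWeight_of_neg_lt_inv hκ hp'κ
  set A := eLpNorm (jacobiWeight κ) p' μ * eLpNorm (jacobiWeight κ) q μ
  have hA : A ≠ ∞ := ENNReal.mul_ne_top hp'mem.eLpNorm_ne_top
    (memLp_jacobiWeight_of_neg_lt_inv hκ hqκ).eLpNorm_ne_top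
  refine ⟨A.toReal + 1, by positivity, fun f hf => ?_⟩
  have hT : kernelOp κ f =ᵐ[μ] (∫ φ, jacobiWeight κ φ * f φ ∂μ) • jacobiWeight κ :=
    ae_restrict_of_forall_mem measurableSet_Ioo fun θ hθ => kernelOp_eq (Ioo_subset_Icc_self hθ) f
  calc eLpNorm (kernelOp κ f) q μ
      = eLpNorm ((∫ φ, jacobiWeight κ φ * f φ ∂μ) • jacobiWeight κ) q μ := eLpNorm_congr_ae hT
    _ ≤ eLpNorm (jacobiWeight κ) p' μ * eLpNorm f p μ * eLpNorm (jacobiWeight κ) q μ :=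
        eLpNorm_integral_mul_smul_le hp'mem.1 hf _ q
    _ = A * eLpNorm f p μ := by ring
    _ ≤ ENNReal.ofReal (A.toReal + 1) * eLpNorm f p μ := by
        gcongr
        exact (ENNReal.le_ofReal_iff_toReal_le hA (by positivity)).2 (by linarith)

lemma rpow_mul_rpow_le_jacobiWeight {κ x : ℝ} (hκ : κ ≤ 0) (hx : x ∈ Ioo 0 π) :
    π ^ κ * x ^ κ ≤ jacobiWeight κ x := by
  rw [jacobiWeight, mul_comm (x ^ κ)]
  exact mul_le_mul_of_nonneg_right
    (rpow_le_rpow_of_nonpos (by linarith [hx.2]) (by linarith [hx.1]) hκ) (rpow_nonneg hx.1.le κ)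

theorem exists_pos_mul_rpow_le_kernelOp_indicator {κ : ℝ} (hκ₁ : -1 < κ) (hκ₀ : κ ≤ 0) :
    ∃ c : ℝ, 0 < c ∧ ∀ θ ∈ Ioo (0 : ℝ) 1,
      c * θ ^ κ ≤ kernelOp κ (indicator (Ioo (0 : ℝ) 1) 1) θ := by
  have hπ : 1 < π := by linarith [pi_gt_three]
  have hsub : Ioo (0 : ℝ) 1 ⊆ Ioo 0 π := Ioo_subset_Ioo_right hπ.le
  set J := ∫ φ in Ioo (0 : ℝ) 1, jacobiWeight κ φ
  have hJ : π ^ κ ≤ J := by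
    have hge := setIntegral_ge_of_const_le (c := π ^ κ) measurableSet_Ioo (by simp)
      (fun φ hφ => ?_) ((integrableOn_jacobiWeight hκ₁).mono_set hsub)
    · simpa using hge
    calc π ^ κ = π ^ κ * 1 := (mul_one _).symm
      _ ≤ π ^ κ * φ ^ κ := by
          gcongr
          exact one_le_rpow_of_pos_of_le_one_of_nonpos hφ.1 hφ.2.le hκ₀
      _ ≤ jacobiWeight κ φ := rpow_mul_rpow_le_jacobiWeight hκ₀ (hsub hφ)
  have hJ₀ : 0 < J := (rpow_pos_of_pos pi_pos κ).trans_le hJ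
  refine ⟨π ^ κ * J, by positivity, fun θ hθ => ?_⟩
  have hTθ : kernelOp κ (indicator (Ioo 0 1) 1) θ = J * jacobiWeight κ θ := by
    have hind : (fun φ => jacobiWeight κ φ * indicator (Ioo 0 1) 1 φ) =
        indicator (Ioo 0 1) (jacobiWeight κ) := by
      ext φ
      by_cases h : φ ∈ Ioo (0 : ℝ) 1 <;> simp [h]
    rw [kernelOp_eq (Ioo_subset_Icc_self (hsub hθ)), hind, integral_indicator measurableSet_Ioo,
      Measure.restrict_restrict measurableSet_Ioo, inter_eq_left.2 hsub]
  calc π ^ κ * J * θ ^ κ = J * (π ^ κ * θ ^ κ) := by ring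
    _ ≤ J * jacobiWeight κ θ := by
        gcongr
        exact rpow_mul_rpow_le_jacobiWeight hκ₀ (hsub hθ)
    _ = _ := hTθ.symm

lemma not_memLp_rpow_ofReal_neg_inv {κ b : ℝ} (hκ : κ < 0) (hb : 0 < b) :
    ¬ MemLp (fun θ : ℝ => θ ^ κ) (ENNReal.ofReal (-1 / κ)) (volume.restrict (Ioo 0 b)) := by
  intro h
  have hq : 0 < -1 / κ := div_pos_of_neg_of_neg (by norm_num) hκ
  have hint := h.integrable_norm_rpow (by simpa using hq) ENNReal.ofReal_ne_top
  rw [ENNReal.toReal_ofReal hq.le] at hint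
  have hinv : IntegrableOn (fun θ : ℝ => θ ^ (-1 : ℝ)) (Ioo 0 b) := by
    refine hint.congr (ae_restrict_of_forall_mem measurableSet_Ioo fun θ hθ => ?_)
    dsimp only
    rw [norm_of_nonneg (rpow_nonneg hθ.1.le _), ← rpow_mul hθ.1.le,
      mul_div_cancel₀ _ hκ.ne]
  exact lt_irrefl _ ((intervalIntegral.integrableOn_Ioo_rpow_iff hb).1 hinv)

lemma eLpNorm_eq_top_of_mul_rpow_le {κ b c : ℝ} {F : ℝ → ℝ} (hκ : κ < 0) (hb : 0 < b)
    (hc : 0 < c) (hF : ∀ θ ∈ Ioo 0 b, c * θ ^ κ ≤ F θ) :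
    eLpNorm F (ENNReal.ofReal (-1 / κ)) (volume.restrict (Ioo 0 b)) = ∞ := by
  by_contra h
  refine not_memLp_rpow_ofReal_neg_inv hκ hb
    ⟨(measurable_id.pow_const κ).aestronglyMeasurable, ?_⟩
  have hle : ∀ θ ∈ Ioo 0 b, ‖θ ^ κ‖ ≤ c⁻¹ * ‖F θ‖ := fun θ hθ => by
    rw [norm_of_nonneg (rpow_nonneg hθ.1.le κ), le_inv_mul_iff₀ hc, norm_eq_abs]
    exact (hF θ hθ).trans (le_abs_self _)
  calc eLpNorm (fun θ : ℝ => θ ^ κ) (ENNReal.ofReal (-1 / κ)) (volume.restrict (Ioo 0 b))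
      ≤ ENNReal.ofReal c⁻¹ * eLpNorm F (ENNReal.ofReal (-1 / κ)) (volume.restrict (Ioo 0 b)) :=
        eLpNorm_le_mul_eLpNorm_of_ae_le_mul (ae_restrict_of_forall_mem measurableSet_Ioo hle) _
    _ < ∞ := ENNReal.mul_lt_top ENNReal.ofReal_lt_top (lt_top_iff_ne_top.2 h)

theorem stmt19 (κ : ℝ) (hκ1 : -1/2 < κ) (hκ0 : κ < 0) :
    (∀ p q : ℝ≥0∞, 1 ≤ p → 1 ≤ q → (p⁻¹).toReal < 1 + κ → -κ < (q⁻¹).toReal →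
      ∃ C : ℝ, 0 < C ∧ ∀ f : ℝ → ℝ, MemLp f p (volume.restrict (Set.Ioo 0 π)) →
        eLpNorm (fun θ => ∫ φ in Set.Ioo (0 : ℝ) π,
              ((θ * φ) ^ κ * ((π - θ) * (π - φ)) ^ κ) * f φ) q (volume.restrict (Set.Ioo 0 π))
          ≤ ENNReal.ofReal C * eLpNorm f p (volume.restrict (Set.Ioo 0 π))) ∧
    (∃ c : ℝ, 0 < c ∧ ∀ θ ∈ Set.Ioo (0 : ℝ) 1,
      c * θ ^ κ ≤ ∫ φ in Set.Ioo (0 : ℝ) π,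
        ((θ * φ) ^ κ * ((π - θ) * (π - φ)) ^ κ) * Set.indicator (Set.Ioo (0 : ℝ) 1) 1 φ) ∧
    (∀ p : ℝ≥0∞, 1 ≤ p → (p⁻¹).toReal < 1 + κ →
      ¬ ∃ C : ℝ, 0 < C ∧ ∀ f : ℝ → ℝ, MemLp f p (volume.restrict (Set.Ioo 0 π)) →
        eLpNorm (fun θ => ∫ φ in Set.Ioo (0 : ℝ) π,
              ((θ * φ) ^ κ * ((π - θ) * (π - φ)) ^ κ) * f φ) (ENNReal.ofReal (-1/κ))
            (volume.restrict (Set.Ioo 0 π))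
          ≤ ENNReal.ofReal C * eLpNorm f p (volume.restrict (Set.Ioo 0 π))) := by
  have hκ : -1 < κ := by linarith
  obtain ⟨c, hc, hlow⟩ := exists_pos_mul_rpow_le_kernelOp_indicator hκ hκ0.le
  refine ⟨fun p q hp _ hpκ hqκ => ?_, ⟨c, hc, hlow⟩, ?_⟩
  · obtain ⟨C, hC, hT⟩ := exists_eLpNorm_kernelOp_le hκ0.le hp hpκ hqκ
    exact ⟨C, hC, fun f hf => hT f hf.1⟩
  · rintro p - - ⟨C, -, hT⟩
    set χ : ℝ → ℝ := indicator (Ioo 0 1) 1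
    have hχ : MemLp χ p (volume.restrict (Ioo 0 π)) :=
      memLp_indicator_const p measurableSet_Ioo 1
        (Or.inr ((Measure.restrict_apply_le _ _).trans_lt (by simp)).ne)
    have hle : ∞ ≤ ENNReal.ofReal C * eLpNorm χ p (volume.restrict (Ioo 0 π)) := calc
      ∞ = eLpNorm (kernelOp κ χ) (ENNReal.ofReal (-1 / κ)) (volume.restrict (Ioo 0 1)) :=
          (eLpNorm_eq_top_of_mul_rpow_le hκ0 one_pos hc hlow).symm
      _ ≤ eLpNorm (kernelOp κ χ) (ENNReal.ofReal (-1 / κ)) (volume.restrict (Ioo 0 π)) :=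
          eLpNorm_mono_measure _
            (Measure.restrict_mono (Ioo_subset_Ioo_right (by linarith [pi_gt_three])) le_rfl)
      _ ≤ _ := hT χ hχ
    exact ENNReal.mul_ne_top ENNReal.ofReal_ne_top hχ.eLpNorm_ne_top (top_le_iff.1 hle)
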